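/- Let p be a prime, h₁, h₂ ∈ Z_p[[x]], k a positive integer, and (π_n) a sequence of elements in the maximal ideal of the integral closure of Z_p in an algebraic closure of Q_p with v_p(π_n) → 0. If h₁(π_n) ≡ h₂(π_n) mod π_n^k (in the ring of integers) for infinitely many n, then the reductions mod p satisfy h̄₁(x) ≡ h̄₂(x) mod x^k in F_p[[x]]. -/

import Mathlib

/-!
Let `i` be the first index at which the reductions of `h₁` and `h₂` differ, and suppose `i < k`.
For `|π_n|` close enough to `1` that `p⁻¹ < |π_n|^i`, the term `a_i π_n^i` of `h₁ - h₂` (a unit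
times `π_n^i`) strictly dominates both the earlier terms (their coefficients are divisible by `p`)
and the later ones, so `|h₁(π_n) - h₂(π_n)| = |π_n|^i > |π_n|^k` for all large `n`, contradicting
the congruence for infinitely many `n`.
-/

open PowerSeries Filter

noncomputable section

/-- Evaluation of a power series at a point of a normed field. -/
def evalT {R K : Type*} [CommSemiring R] [NormedField K] [Algebra R K]
    (f : PowerSeries R) (x : K) : K :=
  ∑' n : ℕ, algebraMap R K (PowerSeries.coeff n f) * x ^ n

theorem IsUltrametricDist.norm_tsum_eq_of_forall_ne_le {E ι : Type*} [NormedAddCommGroup E]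
    [IsUltrametricDist E] [DecidableEq ι] {t : ι → E} (ht : Summable t) {i : ι} {M : ℝ}
    (hM₀ : 0 ≤ M) (hle : ∀ j ≠ i, ‖t j‖ ≤ M) (hlt : M < ‖t i‖) :
    ‖∑' j, t j‖ = ‖t i‖ := by
  have hrest : ‖∑' j, if j = i then 0 else t j‖ ≤ M := by
    refine norm_tsum_le_of_forall_le_of_nonneg hM₀ fun j => ?_
    split_ifs with hj
    · rwa [norm_zero]
    · exact hle j hj
  rw [ht.tsum_eq_add_tsum_ite i, norm_add_eq_max_of_norm_ne_norm (hrest.trans_lt hlt).ne',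
    max_eq_left (hrest.trans hlt.le)]

theorem Summable.of_norm_bounded_of_forall_mem {𝕜 E ι : Type*} [NontriviallyNormedField 𝕜]
    [CompleteSpace 𝕜] [NormedAddCommGroup E] [NormedSpace 𝕜 E] {S : Submodule 𝕜 E}
    [FiniteDimensional 𝕜 S] {f : ι → E} {g : ι → ℝ} (hg : Summable g) (hfg : ∀ i, ‖f i‖ ≤ g i)
    (hS : ∀ i, f i ∈ S) : Summable f := by
  have : CompleteSpace S := FiniteDimensional.complete 𝕜 S
  have hsum : Summable fun i => (⟨f i, hS i⟩ : S) := .of_norm_bounded hg hfg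
  exact hsum.map S.subtype continuous_subtype_val

namespace PadicInt

variable {p : ℕ} [Fact p.Prime]

theorem toZMod_eq_zero_iff_norm_lt_one (a : ℤ_[p]) : toZMod a = 0 ↔ ‖a‖ < 1 := by
  rw [← RingHom.mem_ker, ker_toZMod, IsLocalRing.mem_maximalIdeal, mem_nonunits]

theorem norm_le_inv_of_toZMod_eq_zero {a : ℤ_[p]} (ha : toZMod a = 0) : ‖a‖ ≤ (p : ℝ)⁻¹ := by
  have h := (norm_lt_pow_iff_norm_le_pow_sub_one a 0).mp
    (by rw [zpow_zero]; exact (toZMod_eq_zero_iff_norm_lt_one a).mp ha)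
  simpa using h

theorem norm_eq_one_of_toZMod_ne_zero {a : ℤ_[p]} (ha : toZMod a ≠ 0) : ‖a‖ = 1 :=
  (norm_le_one a).antisymm (not_lt.mp (mt (toZMod_eq_zero_iff_norm_lt_one a).mpr ha))

end PadicInt

section PadicEval

variable {p : ℕ} [Fact p.Prime] {K : Type*} [NormedField K] [Algebra ℚ_[p] K] [Algebra ℤ_[p] K]
  [IsScalarTower ℤ_[p] ℚ_[p] K]

theorem norm_algebraMap_padicInt (hK : ∀ x : ℚ_[p], ‖algebraMap ℚ_[p] K x‖ = ‖x‖) (a : ℤ_[p]) :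
    ‖algebraMap ℤ_[p] K a‖ = ‖a‖ := by
  rw [IsScalarTower.algebraMap_apply ℤ_[p] ℚ_[p] K, hK]
  rfl

theorem norm_algebraMap_coeff_mul_pow_le (hK : ∀ x : ℚ_[p], ‖algebraMap ℚ_[p] K x‖ = ‖x‖)
    (f : ℤ_[p]⟦X⟧) (x : K) (j : ℕ) : ‖algebraMap ℤ_[p] K (coeff j f) * x ^ j‖ ≤ ‖x‖ ^ j := by
  rw [norm_mul, norm_pow, norm_algebraMap_padicInt hK]
  exact mul_le_of_le_one_left (by positivity) (PadicInt.norm_le_one _)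

/-- `K` need not be complete, but the terms all lie in the finite-dimensional, hence complete,
subspace `ℚ_p[x]`. -/
theorem summable_algebraMap_coeff_mul_pow [Algebra.IsAlgebraic ℚ_[p] K]
    (hK : ∀ x : ℚ_[p], ‖algebraMap ℚ_[p] K x‖ = ‖x‖) (f : ℤ_[p]⟦X⟧) {x : K} (hx : ‖x‖ < 1) :
    Summable fun j => algebraMap ℤ_[p] K (coeff j f) * x ^ j := by
  let : NormedSpace ℚ_[p] K := ⟨fun c y => by rw [Algebra.smul_def, norm_mul, hK]⟩
  let A := Algebra.adjoin ℚ_[p] {x}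
  have : FiniteDimensional ℚ_[p] (Subalgebra.toSubmodule A) :=
    Algebra.finite_adjoin_simple_of_isIntegral (Algebra.IsIntegral.isIntegral x)
  refine Summable.of_norm_bounded_of_forall_mem (S := Subalgebra.toSubmodule A)
    (summable_geometric_of_lt_one (norm_nonneg x) hx) (norm_algebraMap_coeff_mul_pow_le hK f x)
    fun j => A.mul_mem ?_ (A.pow_mem (Algebra.self_mem_adjoin_singleton ℚ_[p] x) j)
  rw [IsScalarTower.algebraMap_apply ℤ_[p] ℚ_[p] K]
  exact A.algebraMap_mem _

variable [Algebra.IsAlgebraic ℚ_[p] K] (hK : ∀ x : ℚ_[p], ‖algebraMap ℚ_[p] K x‖ = ‖x‖)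
include hK

theorem evalT_sub (f g : ℤ_[p]⟦X⟧) {x : K} (hx : ‖x‖ < 1) :
    evalT (f - g) x = evalT f x - evalT g x := by
  simp only [evalT, map_sub, sub_mul]
  exact (summable_algebraMap_coeff_mul_pow hK f hx).tsum_sub
    (summable_algebraMap_coeff_mul_pow hK g hx)

theorem norm_evalT_eq_pow_of_order_map_toZMod [IsUltrametricDist K] (f : ℤ_[p]⟦X⟧) {x : K}
    (hx : ‖x‖ < 1) {i : ℕ} (hi : (map PadicInt.toZMod f).order = i)
    (hpx : (p : ℝ)⁻¹ < ‖x‖ ^ i) : ‖evalT f x‖ = ‖x‖ ^ i := by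
  obtain ⟨hi_ne, hlow⟩ := order_eq_nat.mp hi
  simp only [coeff_map] at hi_ne hlow
  have hterm : ‖algebraMap ℤ_[p] K (coeff i f) * x ^ i‖ = ‖x‖ ^ i := by
    rw [norm_mul, norm_pow, norm_algebraMap_padicInt hK,
      PadicInt.norm_eq_one_of_toZMod_ne_zero hi_ne, one_mul]
  have hx_pos : 0 < ‖x‖ ^ i := (inv_pos.mpr (mod_cast (Fact.out : p.Prime).pos)).trans hpx
  rw [evalT, ← hterm]
  refine IsUltrametricDist.norm_tsum_eq_of_forall_ne_le
    (summable_algebraMap_coeff_mul_pow hK f hx) (M := max (p : ℝ)⁻¹ (‖x‖ ^ (i + 1)))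
    ((pow_nonneg (norm_nonneg x) _).trans (le_max_right _ _)) (fun j hj => ?_) ?_
  · rw [norm_mul, norm_pow, norm_algebraMap_padicInt hK]
    rcases hj.lt_or_gt with hji | hij
    · exact le_max_of_le_left <|
        (mul_le_of_le_one_right (norm_nonneg _) (pow_le_one₀ (norm_nonneg x) hx.le)).trans
          (PadicInt.norm_le_inv_of_toZMod_eq_zero (hlow j hji))
    · exact le_max_of_le_right <|
        (mul_le_of_le_one_left (by positivity) (PadicInt.norm_le_one _)).trans
          (pow_le_pow_of_le_one (norm_nonneg x) hx.le hij)
  · rw [hterm, pow_succ]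
    exact max_lt hpx (mul_lt_of_lt_one_right hx_pos hx)

end PadicEval

theorem stmt_11_general (p : ℕ) [Fact p.Prime]
    {K : Type*} [NormedField K] [IsUltrametricDist K]
    [Algebra ℚ_[p] K] [Algebra ℤ_[p] K] [IsScalarTower ℤ_[p] ℚ_[p] K]
    [IsAlgClosure ℚ_[p] K]
    (hK : ∀ x : ℚ_[p], ‖algebraMap ℚ_[p] K x‖ = ‖x‖)
    (h₁ h₂ : PowerSeries ℤ_[p]) (k : ℕ)
    -- a sequence `π_n` in the maximal ideal with `v_p(π_n) → 0`
    (π : ℕ → K) (hπm : ∀ n, ‖π n‖ < 1)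
    (hπv : Tendsto (fun n => ‖π n‖) atTop (nhds 1))
    -- `h₁(π_n) ≡ h₂(π_n) mod π_n^k` for infinitely many `n`
    (hcong : {n : ℕ | ‖evalT h₁ (π n) - evalT h₂ (π n)‖ ≤ ‖π n‖ ^ k}.Infinite) :
    -- `h̄₁ ≡ h̄₂ mod x^k` in `F_p[[x]]`
    ∀ i < k, PadicInt.toZMod (PowerSeries.coeff i h₁) =
      PadicInt.toZMod (PowerSeries.coeff i h₂) := by
  have : Algebra.IsAlgebraic ℚ_[p] K := IsAlgClosure.isAlgebraic
  suffices hk : (k : ℕ∞) ≤ (map PadicInt.toZMod (h₁ - h₂)).order by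
    intro i hi
    simpa [sub_eq_zero] using coeff_of_lt_order i ((Nat.cast_lt.mpr hi).trans_le hk)
  by_contra! hlt
  obtain ⟨i, hi⟩ := ENat.ne_top_iff_exists.mp (hlt.trans_le le_top).ne
  have hik : i < k := by exact_mod_cast hi ▸ hlt
  have hp₀ : (0 : ℝ) < p := mod_cast (Fact.out : p.Prime).pos
  have hp : (p : ℝ)⁻¹ < 1 := inv_lt_one_of_one_lt₀ (mod_cast (Fact.out : p.Prime).one_lt)
  have hev : ∀ᶠ n in atTop, (p : ℝ)⁻¹ < ‖π n‖ ^ i :=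
    (by simpa using hπv.pow i : Tendsto (fun n => ‖π n‖ ^ i) atTop (nhds 1)).eventually
      (eventually_gt_nhds hp)
  obtain ⟨n, hn, hpn⟩ :=
    ((Nat.frequently_atTop_iff_infinite.mpr hcong).and_eventually hev).exists
  have hnorm := norm_evalT_eq_pow_of_order_map_toZMod hK (h₁ - h₂) (hπm n) hi.symm hpn
  rw [evalT_sub hK _ _ (hπm n)] at hnorm
  have hdrop : ‖π n‖ ^ k < ‖π n‖ ^ i :=
    calc ‖π n‖ ^ k ≤ ‖π n‖ ^ (i + 1) := pow_le_pow_of_le_one (norm_nonneg _) (hπm n).le hik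
      _ < ‖π n‖ ^ i := by
        rw [pow_succ]; exact mul_lt_of_lt_one_right ((inv_pos.mpr hp₀).trans hpn) (hπm n)
  exact (hdrop.trans_le (hnorm ▸ hn)).false

theorem stmt_11 (p : ℕ) [Fact p.Prime]
    {K : Type*} [NormedField K] [IsUltrametricDist K]
    [Algebra ℚ_[p] K] [Algebra ℤ_[p] K] [IsScalarTower ℤ_[p] ℚ_[p] K]
    [IsAlgClosure ℚ_[p] K]
    (hK : ∀ x : ℚ_[p], ‖algebraMap ℚ_[p] K x‖ = ‖x‖)
    (h₁ h₂ : PowerSeries ℤ_[p]) (k : ℕ) (hk : 0 < k)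
    -- a sequence `π_n` in the maximal ideal with `v_p(π_n) → 0`
    (π : ℕ → K) (hπ0 : ∀ n, π n ≠ 0) (hπm : ∀ n, ‖π n‖ < 1)
    (hπv : Tendsto (fun n => ‖π n‖) atTop (nhds 1))
    -- `h₁(π_n) ≡ h₂(π_n) mod π_n^k` for infinitely many `n`
    (hcong : {n : ℕ | ‖evalT h₁ (π n) - evalT h₂ (π n)‖ ≤ ‖π n‖ ^ k}.Infinite) :
    -- `h̄₁ ≡ h̄₂ mod x^k` in `F_p[[x]]`
    ∀ i < k, PadicInt.toZMod (PowerSeries.coeff i h₁) =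
      PadicInt.toZMod (PowerSeries.coeff i h₂) :=
  stmt_11_general p hK h₁ h₂ k π hπm hπv hcong
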